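/- Let C be a symmetric monoidal category and F : FinType → CommMon(C) a functor into commutative monoid objects of C. Then the underlying functor FinType → C is symmetric (braided) lax monoidal with coherence morphisms c_{X,Y} : F(X) ⊗ F(Y) → F(X ⊔ Y) defined as F(in_X) ⊗ F(in_Y) followed by the multiplication of the commutative monoid F(X ⊔ Y), where in_X : X → X ⊔ Y and in_Y : Y → X ⊔ Y are the coprojections, and c_1 : 1_C → F(∅) defined as the unit of the commutative monoid F(∅). -/

import Mathlib

open CategoryTheory CategoryTheory.Limits MonoidalCategory

noncomputable local instance fintypeCatMonoidal : MonoidalCategory FintypeCat.{0} :=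
  monoidalOfHasFiniteCoproducts FintypeCat

noncomputable local instance fintypeCatSymmetric : SymmetricCategory FintypeCat.{0} :=
  symmetricOfHasFiniteCoproducts FintypeCat

variable {C : Type*} [Category C] [MonoidalCategory C] [SymmetricCategory C]

/-- The underlying functor `FinType ⥤ C` of a functor into commutative monoid objects. -/
noncomputable def underlyingFunctor (F : FintypeCat.{0} ⥤ CommMon C) : FintypeCat.{0} ⥤ C :=
  F ⋙ CommMon.forget₂Mon C ⋙ Mon.forget C

/-- The coherence morphism `c_{X,Y} : F(X) ⊗ F(Y) → F(X ⊔ Y)`, defined as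
`F(in_X) ⊗ F(in_Y)` followed by the multiplication of the commutative monoid `F(X ⊔ Y)`. -/
noncomputable def coherenceμ (F : FintypeCat.{0} ⥤ CommMon C) (X Y : FintypeCat.{0}) :
    (underlyingFunctor F).obj X ⊗ (underlyingFunctor F).obj Y ⟶
      (underlyingFunctor F).obj (X ⊗ Y) :=
  ((F.map (coprod.inl : X ⟶ X ⊗ Y)).hom.hom ⊗ₘ (F.map (coprod.inr : Y ⟶ X ⊗ Y)).hom.hom) ≫
    MonObj.mul (X := (F.obj (X ⊗ Y)).X)

/-- The coherence morphism `c_1 : 1_C → F(∅)`: the unit of the commutative monoid `F(∅)`. -/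
noncomputable def coherenceε (F : FintypeCat.{0} ⥤ CommMon C) :
    𝟙_ C ⟶ (underlyingFunctor F).obj (𝟙_ FintypeCat.{0}) :=
  MonObj.one (X := (F.obj (𝟙_ FintypeCat.{0})).X)

section Aux

lemma cm_mul_hom {A B : CommMon C} (f : A ⟶ B) :
    MonObj.mul (X := A.X) ≫ f.hom.hom = (f.hom.hom ⊗ₘ f.hom.hom) ≫ MonObj.mul (X := B.X) :=
  IsMonHom.mul_hom f.hom.hom

lemma cm_one_hom {A B : CommMon C} (f : A ⟶ B) :
    MonObj.one (X := A.X) ≫ f.hom.hom = MonObj.one (X := B.X) :=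
  IsMonHom.one_hom f.hom.hom


@[simp] lemma ft_tensorHom {W X Y Z : FintypeCat.{0}} (f : W ⟶ X) (g : Y ⟶ Z) :
    f ⊗ₘ g = Limits.coprod.map f g := rfl

@[simp] lemma ft_whiskerLeft (X : FintypeCat.{0}) {Y Z : FintypeCat.{0}} (f : Y ⟶ Z) :
    X ◁ f = Limits.coprod.map (𝟙 X) f := rfl

@[simp] lemma ft_whiskerRight {X Y : FintypeCat.{0}} (f : X ⟶ Y) (Z : FintypeCat.{0}) :
    f ▷ Z = Limits.coprod.map f (𝟙 Z) := rfl

lemma ft_associator_hom (X Y Z : FintypeCat.{0}) :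
    (α_ X Y Z).hom =
      coprod.desc (coprod.desc coprod.inl (coprod.inl ≫ coprod.inr)) (coprod.inr ≫ coprod.inr) :=
  rfl

@[simp] lemma ft_leftUnitor_hom (X : FintypeCat.{0}) :
    (λ_ X).hom = coprod.desc (initial.to X) (𝟙 _) := rfl

@[simp] lemma ft_rightUnitor_hom (X : FintypeCat.{0}) :
    (ρ_ X).hom = coprod.desc (𝟙 _) (initial.to X) := rfl

@[simp] lemma ft_braiding_hom (X Y : FintypeCat.{0}) :
    (β_ X Y).hom = (Limits.coprod.braiding X Y).hom := rfl

@[simp] lemma underlying_obj (F : FintypeCat.{0} ⥤ CommMon C) (X : FintypeCat.{0}) :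
    (underlyingFunctor F).obj X = (F.obj X).X := rfl

@[simp] lemma underlying_map (F : FintypeCat.{0} ⥤ CommMon C) {X Y : FintypeCat.{0}}
    (f : X ⟶ Y) : (underlyingFunctor F).map f = (F.map f).hom.hom := rfl

/-- Composing the coherence map with the image of a morphism out of the coproduct. -/
lemma mu_comp (F : FintypeCat.{0} ⥤ CommMon C) {X Y W : FintypeCat.{0}} (h : X ⊗ Y ⟶ W) :
    coherenceμ F X Y ≫ (F.map h).hom.hom =
      ((F.map (coprod.inl ≫ h)).hom.hom ⊗ₘ (F.map (coprod.inr ≫ h)).hom.hom) ≫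
        MonObj.mul (X := (F.obj W).X) := by
  dsimp [coherenceμ]
  erw [Category.assoc, cm_mul_hom, tensorHom_comp_tensorHom_assoc,
    ← CommMon.comp_hom, ← CommMon.comp_hom, ← F.map_comp, ← F.map_comp]
  rfl

omit [SymmetricCategory C] in
/-- Associativity of multiplication against three morphisms. -/
lemma assoc_aux (M : Mon C) {X Y Z : C} (a : X ⟶ M.X) (b : Y ⟶ M.X) (c : Z ⟶ M.X) :
    (((a ⊗ₘ b) ≫ MonObj.mul (X := M.X)) ⊗ₘ c) ≫ MonObj.mul (X := M.X) =
      (α_ X Y Z).hom ≫ (a ⊗ₘ ((b ⊗ₘ c) ≫ MonObj.mul (X := M.X))) ≫ MonObj.mul (X := M.X) := by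
  have h1 : (((a ⊗ₘ b) ≫ MonObj.mul (X := M.X)) ⊗ₘ c) ≫ MonObj.mul (X := M.X)
      = ((a ⊗ₘ b) ⊗ₘ c) ≫ MonObj.mul (X := M.X) ▷ M.X ≫ MonObj.mul (X := M.X) := by
    erw [← tensorHom_id, tensorHom_comp_tensorHom_assoc, Category.comp_id]
  have h2 : (a ⊗ₘ ((b ⊗ₘ c) ≫ MonObj.mul (X := M.X))) ≫ MonObj.mul (X := M.X)
      = (a ⊗ₘ (b ⊗ₘ c)) ≫ M.X ◁ MonObj.mul (X := M.X) ≫ MonObj.mul (X := M.X) := by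
    erw [← id_tensorHom, tensorHom_comp_tensorHom_assoc, Category.comp_id]
  rw [h1, h2, MonObj.mul_assoc, associator_naturality_assoc]

end Aux

/-- The lax braided structure. -/
noncomputable def auxLaxBraided (F : FintypeCat.{0} ⥤ CommMon C) :
    Functor.LaxBraided (underlyingFunctor F) where
  ε := coherenceε F
  μ := coherenceμ F
  μ_natural_left := by
    intro X Y f X'
    erw [underlying_map, underlying_map, mu_comp]
    dsimp only [coherenceμ, underlying_obj]
    erw [← tensorHom_id, tensorHom_comp_tensorHom_assoc]
    congr 2
    · erw [← CommMon.comp_hom, ← F.map_comp]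
      congr 2
      simp
    · erw [Category.id_comp]
      congr 2
      simp
  μ_natural_right := by
    intro X Y X' f
    erw [underlying_map, underlying_map, mu_comp]
    dsimp only [coherenceμ, underlying_obj]
    erw [← id_tensorHom, tensorHom_comp_tensorHom_assoc]
    congr 2
    · erw [Category.id_comp]
      congr 2
      simp
    · erw [← CommMon.comp_hom, ← F.map_comp]
      congr 2
      simp
  associativity := by
    intro X Y Z
    erw [underlying_map, mu_comp]
    erw [← tensorHom_id, tensorHom_comp_tensorHom_assoc, Category.id_comp,
      mu_comp F (coprod.inl ≫ (α_ X Y Z).hom)]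
    erw [assoc_aux (F.obj (X ⊗ Y ⊗ Z)).toMon]
    rw [show coherenceμ F X (Y ⊗ Z) =
        ((F.map (coprod.inl : X ⟶ X ⊗ (Y ⊗ Z))).hom.hom ⊗ₘ
          (F.map (coprod.inr : Y ⊗ Z ⟶ X ⊗ (Y ⊗ Z))).hom.hom) ≫
            MonObj.mul (X := (F.obj (X ⊗ (Y ⊗ Z))).X)
      from rfl]
    erw [← id_tensorHom, tensorHom_comp_tensorHom_assoc, Category.id_comp,
      mu_comp F (coprod.inr : (Y ⊗ Z : FintypeCat.{0}) ⟶ X ⊗ (Y ⊗ Z))]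
    congr 4 <;> simp [ft_associator_hom]
    · rw [← F.map_comp, ← F.map_comp]
      congr 2
      erw [coprod.inl_desc, coprod.inl_desc]
    · congr 1
      · erw [← CommMon.comp_hom, ← CommMon.comp_hom, ← F.map_comp, ← F.map_comp]
        congr 3
        erw [coprod.inl_desc, coprod.inr_desc]
        rw [F.map_comp]
        exact CommMon.comp_hom _ _
      · erw [← CommMon.comp_hom, ← F.map_comp]
        congr 3
        erw [coprod.inr_desc]
        rw [F.map_comp]
        exact CommMon.comp_hom _ _
  left_unitality := by
    intro X
    erw [underlying_map, mu_comp]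
    dsimp only [coherenceε, underlying_obj]
    erw [← tensorHom_id, tensorHom_comp_tensorHom_assoc]
    have h1 : coprod.inl ≫ (λ_ X).hom = initial.to X := initial.hom_ext _ _
    have h2 : coprod.inr ≫ (λ_ X).hom = 𝟙 X := by
      erw [coprod.inr_desc]
    erw [h1, h2, F.map_id, cm_one_hom, CommMon.id_hom, Category.id_comp,
      tensorHom_id, MonObj.one_mul]
  right_unitality := by
    intro X
    erw [underlying_map, mu_comp]
    dsimp only [coherenceε, underlying_obj]
    erw [← id_tensorHom, tensorHom_comp_tensorHom_assoc]
    have h1 : coprod.inl ≫ (ρ_ X).hom = 𝟙 X := by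
      erw [coprod.inl_desc]
    have h2 : coprod.inr ≫ (ρ_ X).hom = initial.to X := initial.hom_ext _ _
    erw [h1, h2, F.map_id, cm_one_hom, CommMon.id_hom, Category.id_comp,
      id_tensorHom, MonObj.mul_one]
  braided := by
    intro X Y
    show coherenceμ F X Y ≫ (underlyingFunctor F).map (β_ X Y).hom = _ ≫ coherenceμ F Y X
    erw [underlying_map, mu_comp]
    dsimp only [coherenceμ, underlying_obj]
    have h1 : coprod.inl ≫ (β_ X Y).hom = (coprod.inr : X ⟶ Y ⊗ X) := by
      simp
      erw [coprod.inl_desc]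
    have h2 : coprod.inr ≫ (β_ X Y).hom = (coprod.inl : Y ⟶ Y ⊗ X) := by
      simp
      erw [coprod.inr_desc]
    erw [h1, h2, ← BraidedCategory.braiding_naturality_assoc]
    congr 1
    exact (IsCommMonObj.mul_comm (F.obj (Y ⊗ X)).X).symm

/-- STATEMENT 1: for a functor `F : FinType ⥤ CommMon(C)` into commutative monoid objects
of a symmetric monoidal category `C`, the underlying functor `FinType ⥤ C` is symmetric
(braided) lax monoidal, with coherence morphisms `c_{X,Y}` given by
`F(in_X) ⊗ F(in_Y)` followed by the multiplication of `F(X ⊔ Y)`, and `c_1` the unit of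
the commutative monoid `F(∅)`. -/
theorem underlying_functor_laxBraided (F : FintypeCat.{0} ⥤ CommMon C) :
    ∃ inst : Functor.LaxBraided (underlyingFunctor F),
      inst.toLaxMonoidal.ε = coherenceε F ∧
        inst.toLaxMonoidal.μ = coherenceμ F :=
  ⟨auxLaxBraided F, rfl, rfl⟩
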